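/- Let I ⊆ ℝ[x_1,...,x_n] be a zero-dimensional ideal such that V_ℂ(I) ⊂ ℝ^n (all complex solutions are real), and let s be a separating polynomial for V(I). Then there exist a nonzero polynomial η ∈ ℝ[t] and polynomials ρ_1,...,ρ_n ∈ ℝ[t] such that: (i) the real roots of η are exactly {s(a) : a ∈ V(I)}, and (ii) V(I) = {(ρ_1(τ),...,ρ_n(τ)) : τ ∈ ℝ, η(τ) = 0}. -/

import Mathlib

/-!
A zero-dimensional ideal has only finitely many zeros: modulo `I` each variable `x_i` is
integral, i.e. satisfies a monic univariate equation, so each coordinate of a zero is a root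
of a fixed nonzero polynomial. Then `η = ∏ (t - s(a))` over the zeros `a` has exactly the
values of `s` as roots, and since `s` separates the zeros, Lagrange interpolation through
the nodes `(s(a), a_i)` gives the `ρ_i`.
-/

open Polynomial

namespace MvPolynomial

variable {k K σ : Type*} [Field k] [Field K] [Algebra k K]

theorem finite_zeroLocus_of_isIntegral [Finite σ] (I : Ideal (MvPolynomial σ k))
    [Algebra.IsIntegral k (MvPolynomial σ k ⧸ I)] : (zeroLocus K I).Finite := by
  have coord_root : ∀ i, ∃ p : k[X], p.Monic ∧
      ∀ x ∈ zeroLocus K I, Polynomial.aeval (x i) p = 0 := by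
    intro i
    obtain ⟨p, hmonic, hp⟩ := Algebra.IsIntegral.isIntegral (R := k) (Ideal.Quotient.mk I (X i))
    have hpI : Polynomial.aeval (X i) p ∈ I := by
      rw [← Ideal.Quotient.eq_zero_iff_mem, ← Ideal.Quotient.mkₐ_eq_mk k,
        ← Polynomial.aeval_algHom_apply]
      exact hp
    refine ⟨p, hmonic, fun x hx => ?_⟩
    rw [← aeval_X (R := k) x i, Polynomial.aeval_algHom_apply]
    exact hx _ hpI
  choose p hmonic hroot using coord_root
  refine (Set.Finite.pi fun i => finite_setOfPred_isRoot
    ((hmonic i).map (algebraMap k K)).ne_zero).subset fun x hx i _ => ?_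
  simpa [IsRoot, eval_map_algebraMap] using hroot i x hx

end MvPolynomial

namespace Polynomial

variable {K : Type*} [Field K]

theorem exists_ne_zero_eval_eq_zero_iff_mem {S : Set K} (hS : S.Finite) :
    ∃ η : K[X], η ≠ 0 ∧ ∀ τ, η.eval τ = 0 ↔ τ ∈ S := by
  classical
  refine ⟨∏ τ ∈ hS.toFinset, (X - C τ),
    (monic_prod_of_monic _ _ fun τ _ => monic_X_sub_C τ).ne_zero, fun τ => ?_⟩
  simp [eval_prod, Finset.prod_eq_zero_iff, sub_eq_zero]

theorem exists_eval_eq_of_injOn {ι : Type*} {V : Set (ι → K)} (hV : V.Finite)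
    {f : (ι → K) → K} (hf : V.InjOn f) :
    ∃ ρ : ι → K[X], ∀ a ∈ V, ∀ i, (ρ i).eval (f a) = a i := by
  classical
  refine ⟨fun i => Lagrange.interpolate hV.toFinset f (fun a => a i), fun a ha i => ?_⟩
  exact Lagrange.eval_interpolate_at_node _ (by simpa using hf) (by simpa using ha)

theorem exists_univariate_representation {ι : Type*} {V : Set (ι → K)} (hV : V.Finite)
    {f : (ι → K) → K} (hf : V.InjOn f) :
    ∃ η : K[X], η ≠ 0 ∧ ∃ ρ : ι → K[X], (∀ τ, η.eval τ = 0 ↔ τ ∈ f '' V) ∧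
      V = {x | ∃ τ, η.eval τ = 0 ∧ ∀ i, x i = (ρ i).eval τ} := by
  obtain ⟨η, hη, hroots⟩ := exists_ne_zero_eval_eq_zero_iff_mem (hV.image f)
  obtain ⟨ρ, hρ⟩ := exists_eval_eq_of_injOn hV hf
  refine ⟨η, hη, ρ, hroots, Set.ext fun x => ⟨fun hx => ?_, ?_⟩⟩
  · exact ⟨f x, (hroots _).2 ⟨x, hx, rfl⟩, fun i => (hρ x hx i).symm⟩
  · rintro ⟨τ, hτ, hx⟩
    obtain ⟨a, ha, rfl⟩ := (hroots τ).1 hτ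
    convert ha
    funext i
    rw [hx i, hρ a ha i]

end Polynomial

theorem real_PUR_exists_general {n : ℕ}
    (I : Ideal (MvPolynomial (Fin n) ℝ))
    (hfin : FiniteDimensional ℝ (MvPolynomial (Fin n) ℝ ⧸ I))
    (s : MvPolynomial (Fin n) ℝ)
    (hsep : ∀ a b : Fin n → ℝ,
      (∀ q ∈ I, MvPolynomial.eval a q = 0) →
      (∀ q ∈ I, MvPolynomial.eval b q = 0) →
      a ≠ b → MvPolynomial.eval a s ≠ MvPolynomial.eval b s) :
    ∃ η : Polynomial ℝ, η ≠ 0 ∧ ∃ ρ : Fin n → Polynomial ℝ,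
      (∀ τ : ℝ, η.eval τ = 0 ↔
        ∃ a : Fin n → ℝ, (∀ q ∈ I, MvPolynomial.eval a q = 0) ∧
          MvPolynomial.eval a s = τ) ∧
      {a : Fin n → ℝ | ∀ q ∈ I, MvPolynomial.eval a q = 0} =
        {x : Fin n → ℝ | ∃ τ : ℝ, η.eval τ = 0 ∧
          ∀ i, x i = (ρ i).eval τ} := by
  have : Algebra.IsIntegral ℝ (MvPolynomial (Fin n) ℝ ⧸ I) :=
    Algebra.IsIntegral.of_finite ℝ _
  -- over `ℝ` itself, `aeval` is `eval`, so the real zero set is `zeroLocus ℝ I` by definition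
  have hfinite : {a : Fin n → ℝ | ∀ q ∈ I, MvPolynomial.eval a q = 0}.Finite :=
    MvPolynomial.finite_zeroLocus_of_isIntegral (K := ℝ) I
  have hinj :
      {a : Fin n → ℝ | ∀ q ∈ I, MvPolynomial.eval a q = 0}.InjOn (MvPolynomial.eval · s) :=
    fun a ha b hb hab => by_contra fun hne => hsep a b ha hb hne hab
  exact Polynomial.exists_univariate_representation hfinite hinj

theorem real_PUR_exists {n : ℕ}
    (I : Ideal (MvPolynomial (Fin n) ℝ))
    (hfin : FiniteDimensional ℝ (MvPolynomial (Fin n) ℝ ⧸ I))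
    (hreal : ∀ x : Fin n → ℂ, (∀ q ∈ I, MvPolynomial.aeval x q = 0) →
      ∀ i, (x i).im = 0)
    (s : MvPolynomial (Fin n) ℝ)
    (hsep : ∀ a b : Fin n → ℝ,
      (∀ q ∈ I, MvPolynomial.eval a q = 0) →
      (∀ q ∈ I, MvPolynomial.eval b q = 0) →
      a ≠ b → MvPolynomial.eval a s ≠ MvPolynomial.eval b s) :
    ∃ η : Polynomial ℝ, η ≠ 0 ∧ ∃ ρ : Fin n → Polynomial ℝ,
      (∀ τ : ℝ, η.eval τ = 0 ↔
        ∃ a : Fin n → ℝ, (∀ q ∈ I, MvPolynomial.eval a q = 0) ∧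
          MvPolynomial.eval a s = τ) ∧
      {a : Fin n → ℝ | ∀ q ∈ I, MvPolynomial.eval a q = 0} =
        {x : Fin n → ℝ | ∃ τ : ℝ, η.eval τ = 0 ∧
          ∀ i, x i = (ρ i).eval τ} :=
  real_PUR_exists_general I hfin s hsep
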